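/- arXiv:2508.05120 — 2 statements merged into one kernel-verified Lean document; each statement's English description precedes it below -/
import Mathlib

section
/- For every real x, the function f(x) = (1/sinh x − 1/x)·(1/x) (extended continuously by f(0) = −1/6) satisfies |f(x)| ≤ 1/6. -/
open Real Set

/-- `f(x) = (1/sinh x − 1/x)·(1/x)`, extended continuously by `f(0) = −1/6`. -/
noncomputable def fAux (x : ℝ) : ℝ :=
  if x = 0 then -1/6 else (1 / Real.sinh x - 1 / x) / x

/-
Both sides of `|f x| ≤ 1/6` are even in `x`, so take `x > 0`. There `f x ≤ 0` because
`x ≤ sinh x`, and `-1/6 ≤ f x` is the inequality `6 (sinh x - x) ≤ x² sinh x`. The difference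
`(x² - 6) sinh x + 6 x` vanishes at `0` together with its first two derivatives, and its third
derivative `x² cosh x + 6 x sinh x` is nonnegative for `x ≥ 0`; integrating three times gives it.
-/

lemma monotoneOn_Ici_of_hasDerivAt_nonneg {f f' : ℝ → ℝ} {a : ℝ}
    (hf : ∀ x, HasDerivAt f (f' x) x) (hf' : ∀ x, a ≤ x → 0 ≤ f' x) : MonotoneOn f (Ici a) :=
  monotoneOn_of_hasDerivWithinAt_nonneg (convex_Ici a)
    (continuous_iff_continuousAt.2 fun x ↦ (hf x).continuousAt).continuousOn
    (fun x _ ↦ (hf x).hasDerivWithinAt) fun x hx ↦ hf' x (interior_subset hx)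

lemma nonneg_of_hasDerivAt_nonneg {f f' : ℝ → ℝ} (hf : ∀ x, HasDerivAt f (f' x) x)
    (hf' : ∀ x, 0 ≤ x → 0 ≤ f' x) (h₀ : f 0 = 0) {x : ℝ} (hx : 0 ≤ x) : 0 ≤ f x :=
  h₀ ▸ monotoneOn_Ici_of_hasDerivAt_nonneg hf hf' self_mem_Ici hx hx

lemma six_mul_sinh_sub_self_le {x : ℝ} (hx : 0 ≤ x) : 6 * (sinh x - x) ≤ x ^ 2 * sinh x := by
  have hasDerivAt₂ (y : ℝ) : HasDerivAt (fun y ↦ (y ^ 2 - 4) * sinh y + 4 * y * cosh y)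
      (y ^ 2 * cosh y + 6 * y * sinh y) y := by
    refine ((((hasDerivAt_pow 2 y).sub_const 4).mul (hasDerivAt_sinh y)).add
      (((hasDerivAt_id y).const_mul 4).mul (hasDerivAt_cosh y))).congr_deriv ?_
    simp only [id_eq]; push_cast; ring
  have hasDerivAt₁ (y : ℝ) : HasDerivAt (fun y ↦ 2 * y * sinh y + (y ^ 2 - 6) * cosh y + 6)
      ((y ^ 2 - 4) * sinh y + 4 * y * cosh y) y := by
    refine (((((hasDerivAt_id y).const_mul 2).mul (hasDerivAt_sinh y)).add
      (((hasDerivAt_pow 2 y).sub_const 6).mul (hasDerivAt_cosh y))).add_const 6).congr_deriv ?_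
    simp only [id_eq]; push_cast; ring
  have hasDerivAt₀ (y : ℝ) : HasDerivAt (fun y ↦ (y ^ 2 - 6) * sinh y + 6 * y)
      (2 * y * sinh y + (y ^ 2 - 6) * cosh y + 6) y := by
    refine ((((hasDerivAt_pow 2 y).sub_const 6).mul (hasDerivAt_sinh y)).add
      ((hasDerivAt_id y).const_mul 6)).congr_deriv ?_
    push_cast; ring
  have third_deriv_nonneg (y : ℝ) (hy : 0 ≤ y) : 0 ≤ y ^ 2 * cosh y + 6 * y * sinh y := by
    have := sinh_nonneg_iff.2 hy
    positivity
  have := nonneg_of_hasDerivAt_nonneg hasDerivAt₀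
    (fun y ↦ nonneg_of_hasDerivAt_nonneg hasDerivAt₁
      (fun y ↦ nonneg_of_hasDerivAt_nonneg hasDerivAt₂ third_deriv_nonneg (by simp))
      (by simp))
    (by simp) hx
  linarith

lemma fAux_neg (x : ℝ) : fAux (-x) = fAux x := by
  rcases eq_or_ne x 0 with rfl | hx
  · simp
  · simp only [fAux, neg_eq_zero, hx, if_false, sinh_neg]
    ring

lemma fAux_nonpos_of_nonneg {x : ℝ} (hx : 0 ≤ x) : fAux x ≤ 0 := by
  rcases hx.eq_or_lt with rfl | hx
  · norm_num [fAux]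
  · rw [fAux, if_neg hx.ne']
    have : 1 / sinh x ≤ 1 / x := one_div_le_one_div_of_le hx (self_le_sinh_iff.2 hx.le)
    exact div_nonpos_of_nonpos_of_nonneg (by linarith) hx.le

lemma neg_one_div_six_le_fAux_of_nonneg {x : ℝ} (hx : 0 ≤ x) : -1 / 6 ≤ fAux x := by
  rcases hx.eq_or_lt with rfl | hx
  · simp [fAux]
  · have hsinh : 0 < sinh x := sinh_pos_iff.2 hx
    rw [fAux, if_neg hx.ne', le_div_iff₀ hx, div_sub_div _ _ hsinh.ne' hx.ne',
      le_div_iff₀ (by positivity)]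
    nlinarith [six_mul_sinh_sub_self_le hx.le]

lemma abs_fAux_le_of_nonneg {x : ℝ} (hx : 0 ≤ x) : |fAux x| ≤ 1 / 6 :=
  abs_le.2 ⟨by linarith [neg_one_div_six_le_fAux_of_nonneg hx],
    (fAux_nonpos_of_nonneg hx).trans (by norm_num)⟩

/-- For every real `x`, `|f(x)| ≤ 1/6`. -/
theorem stmt4 : ∀ x : ℝ, |fAux x| ≤ 1/6 := by
  intro x
  rcases le_total 0 x with hx | hx
  · exact abs_fAux_le_of_nonneg hx
  · rw [← fAux_neg]
    exact abs_fAux_le_of_nonneg (neg_nonneg.2 hx)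
end

section
/- Let M(t) be a 4×4 real symmetric matrix family of the Gram form with entries depending continuously on edge lengths (l₁(t),…,l₆(t)) ∈ ℝ_{≥0}⁶, and suppose det Gram(l) < 0 on a set 𝓛. Then for l₁,…,l₆ with det Gram(l) < 0 and any fixed k, sinh²(l_k) · det Gram(l) = G_{pq}² − G_{pp}G_{qq} where {p,q} is the pair of indices of the two truncation triangles joined by edge k; in particular G_{pq}² − G_{pp}G_{qq} < 0, so the ratio G_{pq}/√(G_{pp}G_{qq}) lies in (−1, 1) (the cofactors G_{pp}, G_{qq} being nonzero of the same sign). -/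
/-- The Gram matrix `Gram(l₁,…,l₆)` of a (generalized) truncated hyperideal tetrahedron:
the `(i,j)` entry is `−cosh` of the length of the edge joining truncation triangles
`Tᵢ` and `Tⱼ` (`l₁ ↔ (1,2)`, `l₂ ↔ (1,3)`, `l₆ ↔ (1,4)`, `l₃ ↔ (2,3)`, `l₅ ↔ (2,4)`,
`l₄ ↔ (3,4)`), with `1` on the diagonal. -/
noncomputable def gram (l₁ l₂ l₃ l₄ l₅ l₆ : ℝ) : Matrix (Fin 4) (Fin 4) ℝ :=
  !![1, -Real.cosh l₁, -Real.cosh l₂, -Real.cosh l₆;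
     -Real.cosh l₁, 1, -Real.cosh l₃, -Real.cosh l₅;
     -Real.cosh l₂, -Real.cosh l₃, 1, -Real.cosh l₄;
     -Real.cosh l₆, -Real.cosh l₅, -Real.cosh l₄, 1]

/-- The `(3,3)` cofactor (1-indexed) of the Gram matrix. -/
noncomputable def cofG33 (l₁ l₂ l₃ l₄ l₅ l₆ : ℝ) : ℝ :=
  (!![1, -Real.cosh l₁, -Real.cosh l₆;
      -Real.cosh l₁, 1, -Real.cosh l₅;
      -Real.cosh l₆, -Real.cosh l₅, 1] : Matrix (Fin 3) (Fin 3) ℝ).det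

/-- The `(4,4)` cofactor (1-indexed) of the Gram matrix. -/
noncomputable def cofG44 (l₁ l₂ l₃ l₄ l₅ l₆ : ℝ) : ℝ :=
  (!![1, -Real.cosh l₁, -Real.cosh l₂;
      -Real.cosh l₁, 1, -Real.cosh l₃;
      -Real.cosh l₂, -Real.cosh l₃, 1] : Matrix (Fin 3) (Fin 3) ℝ).det

/-- The `(3,4)` cofactor (1-indexed) of the Gram matrix. -/
noncomputable def cofG34 (l₁ l₂ l₃ l₄ l₅ l₆ : ℝ) : ℝ :=
  -(!![1, -Real.cosh l₁, -Real.cosh l₂;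
       -Real.cosh l₁, 1, -Real.cosh l₃;
       -Real.cosh l₆, -Real.cosh l₅, -Real.cosh l₄] : Matrix (Fin 3) (Fin 3) ℝ).det

/-!
The identity is the instance of Jacobi's complementary-minor identity
`det M · det M[{1,2},{1,2}] = G₃₃G₄₄ − G₃₄G₄₃` for the symmetric matrix `M = Gram(l)`,
whose leading `2 × 2` minor is `1 − cosh² l₁ = −sinh² l₁`. Once `sinh l₁ ≠ 0` and
`det Gram(l) < 0`, the identity gives `G₃₄² < G₃₃G₄₄`, which is everything else.
-/

theorem det_mul_one_sub_sq_eq_cofactors {R : Type*} [CommRing R] (a b c d e f : R) :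
    (!![1, a, b, f; a, 1, c, e; b, c, 1, d; f, e, d, 1] : Matrix (Fin 4) (Fin 4) R).det *
        (1 - a ^ 2) =
      (!![1, a, f; a, 1, e; f, e, 1] : Matrix (Fin 3) (Fin 3) R).det *
          (!![1, a, b; a, 1, c; b, c, 1] : Matrix (Fin 3) (Fin 3) R).det -
        (!![1, a, b; a, 1, c; f, e, d] : Matrix (Fin 3) (Fin 3) R).det ^ 2 := by
  simp [Matrix.det_succ_row_zero, Fin.sum_univ_succ, Fin.succAbove]
  ring

theorem sinh_sq_mul_det_gram (l₁ l₂ l₃ l₄ l₅ l₆ : ℝ) :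
    Real.sinh l₁ ^ 2 * (gram l₁ l₂ l₃ l₄ l₅ l₆).det =
      cofG34 l₁ l₂ l₃ l₄ l₅ l₆ ^ 2 - cofG33 l₁ l₂ l₃ l₄ l₅ l₆ * cofG44 l₁ l₂ l₃ l₄ l₅ l₆ := by
  have h := det_mul_one_sub_sq_eq_cofactors (-Real.cosh l₁) (-Real.cosh l₂) (-Real.cosh l₃)
    (-Real.cosh l₄) (-Real.cosh l₅) (-Real.cosh l₆)
  rw [neg_sq, Real.cosh_sq] at h
  unfold gram cofG33 cofG44 cofG34
  linear_combination -h

theorem abs_div_sqrt_lt_one_of_sq_lt {x y : ℝ} (h : x ^ 2 < y) : |x / √y| < 1 := by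
  have hy : 0 < √y := Real.sqrt_pos.2 ((sq_nonneg x).trans_lt h)
  rw [abs_div, abs_of_pos hy, div_lt_one hy]
  exact (Real.lt_sqrt (abs_nonneg x)).2 (by rwa [sq_abs])

theorem stmt19_general (l₁ l₂ l₃ l₄ l₅ l₆ : ℝ)
    (h1 : 0 < l₁) (hdet : (gram l₁ l₂ l₃ l₄ l₅ l₆).det < 0) :
    Real.sinh l₁ ^ 2 * (gram l₁ l₂ l₃ l₄ l₅ l₆).det =
        cofG34 l₁ l₂ l₃ l₄ l₅ l₆ ^ 2 -
          cofG33 l₁ l₂ l₃ l₄ l₅ l₆ * cofG44 l₁ l₂ l₃ l₄ l₅ l₆ ∧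
    cofG34 l₁ l₂ l₃ l₄ l₅ l₆ ^ 2 -
        cofG33 l₁ l₂ l₃ l₄ l₅ l₆ * cofG44 l₁ l₂ l₃ l₄ l₅ l₆ < 0 ∧
    cofG33 l₁ l₂ l₃ l₄ l₅ l₆ ≠ 0 ∧ cofG44 l₁ l₂ l₃ l₄ l₅ l₆ ≠ 0 ∧
    0 < cofG33 l₁ l₂ l₃ l₄ l₅ l₆ * cofG44 l₁ l₂ l₃ l₄ l₅ l₆ ∧
    -1 < cofG34 l₁ l₂ l₃ l₄ l₅ l₆ /
        Real.sqrt (cofG33 l₁ l₂ l₃ l₄ l₅ l₆ * cofG44 l₁ l₂ l₃ l₄ l₅ l₆) ∧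
    cofG34 l₁ l₂ l₃ l₄ l₅ l₆ /
        Real.sqrt (cofG33 l₁ l₂ l₃ l₄ l₅ l₆ * cofG44 l₁ l₂ l₃ l₄ l₅ l₆) < 1 := by
  set G₃₃ := cofG33 l₁ l₂ l₃ l₄ l₅ l₆
  set G₄₄ := cofG44 l₁ l₂ l₃ l₄ l₅ l₆
  set G₃₄ := cofG34 l₁ l₂ l₃ l₄ l₅ l₆
  have key := sinh_sq_mul_det_gram l₁ l₂ l₃ l₄ l₅ l₆
  have hneg : G₃₄ ^ 2 - G₃₃ * G₄₄ < 0 :=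
    key ▸ mul_neg_of_pos_of_neg (pow_pos (Real.sinh_pos_iff.2 h1) 2) hdet
  have hpos : 0 < G₃₃ * G₄₄ := by nlinarith [sq_nonneg G₃₄]
  have hratio := abs_lt.1 (abs_div_sqrt_lt_one_of_sq_lt (sub_neg.1 hneg))
  exact ⟨key, hneg, left_ne_zero_of_mul hpos.ne', right_ne_zero_of_mul hpos.ne', hpos,
    hratio.1, hratio.2⟩

/-- key instance `k = 1`, `(p,q) = (3,4)`.  If `l₁,…,l₆ ≥ 0`,
`l₁ > 0` and `det Gram(l) < 0`, then `sinh²(l₁)·det Gram(l) = G₃₄² − G₃₃G₄₄`; in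
particular `G₃₄² − G₃₃G₄₄ < 0`, the cofactors `G₃₃`, `G₄₄` are nonzero of the same
sign, and the ratio `G₃₄/√(G₃₃G₄₄)` lies in `(−1, 1)`. -/
theorem stmt19 (l₁ l₂ l₃ l₄ l₅ l₆ : ℝ)
    (hl₁ : 0 ≤ l₁) (hl₂ : 0 ≤ l₂) (hl₃ : 0 ≤ l₃)
    (hl₄ : 0 ≤ l₄) (hl₅ : 0 ≤ l₅) (hl₆ : 0 ≤ l₆)
    (h1 : 0 < l₁) (hdet : (gram l₁ l₂ l₃ l₄ l₅ l₆).det < 0) :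
    Real.sinh l₁ ^ 2 * (gram l₁ l₂ l₃ l₄ l₅ l₆).det =
        cofG34 l₁ l₂ l₃ l₄ l₅ l₆ ^ 2 -
          cofG33 l₁ l₂ l₃ l₄ l₅ l₆ * cofG44 l₁ l₂ l₃ l₄ l₅ l₆ ∧
    cofG34 l₁ l₂ l₃ l₄ l₅ l₆ ^ 2 -
        cofG33 l₁ l₂ l₃ l₄ l₅ l₆ * cofG44 l₁ l₂ l₃ l₄ l₅ l₆ < 0 ∧
    cofG33 l₁ l₂ l₃ l₄ l₅ l₆ ≠ 0 ∧ cofG44 l₁ l₂ l₃ l₄ l₅ l₆ ≠ 0 ∧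
    0 < cofG33 l₁ l₂ l₃ l₄ l₅ l₆ * cofG44 l₁ l₂ l₃ l₄ l₅ l₆ ∧
    -1 < cofG34 l₁ l₂ l₃ l₄ l₅ l₆ /
        Real.sqrt (cofG33 l₁ l₂ l₃ l₄ l₅ l₆ * cofG44 l₁ l₂ l₃ l₄ l₅ l₆) ∧
    cofG34 l₁ l₂ l₃ l₄ l₅ l₆ /
        Real.sqrt (cofG33 l₁ l₂ l₃ l₄ l₅ l₆ * cofG44 l₁ l₂ l₃ l₄ l₅ l₆) < 1 :=
  stmt19_general l₁ l₂ l₃ l₄ l₅ l₆ h1 hdet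
end
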